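/- arXiv:2208.12042 — 6 statements merged into one kernel-verified Lean document; each statement's English description precedes it below -/
import Mathlib

section
/- Let μ ∈ ℝ, σ > 0, and let S ⊆ ℝ be measurable with survival probability α = N(μ,σ²)(S) > 0. Then the second moment of the truncated Gaussian about its untruncated mean satisfies E_{y ~ N(μ,σ²,S)}[(y − μ)²] ≤ (4 − 2·log α)·σ². Equivalently, ∫_S (y − μ)² dN(μ,σ²)(y) ≤ α·(4 − 2·log α)·σ². -/
/-!
Reduce to the standard Gaussian `γ` by the affine change of variables `y = σ x + μ`. For a set
`T` of mass `α` and any `t`, `x² ≤ t² + (x² - t²)⁺` gives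
`∫_T x² dγ ≤ α t² + ∫ (x² - t²)⁺ dγ`. Since `x² / 2 ≥ t² / 2 + t (x - t)`, the tail integral is
at most `e^{-t²/2}` times an explicit Gamma-type integral, hence `≤ 4 e^{-t²/2}` for `t ≥ 1`.
Choosing `t² = 2 - 2 log α` makes `e^{-t²/2} = α / e`, so the tail contributes at most `2α`.
-/

open MeasureTheory ProbabilityTheory Real Set
open scoped Nat

lemma integrableOn_pow_mul_exp_neg_mul_Ioi (n : ℕ) {t : ℝ} (ht : 0 < t) :
    IntegrableOn (fun u : ℝ ↦ u ^ n * exp (-(t * u))) (Ioi 0) := by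
  simpa [rpow_natCast] using
    integrableOn_rpow_mul_exp_neg_mul_rpow (s := n) (p := 1) (by linarith [n.cast_nonneg (α := ℝ)])
      one_pos ht

lemma integral_pow_mul_exp_neg_mul_Ioi (n : ℕ) {t : ℝ} (ht : 0 < t) :
    ∫ u in Ioi (0 : ℝ), u ^ n * exp (-(t * u)) = n ! / t ^ (n + 1) := by
  have h := integral_rpow_mul_exp_neg_mul_Ioi (a := n + 1) (by positivity) ht
  rw [Gamma_nat_eq_factorial, add_sub_cancel_right, div_rpow zero_le_one ht.le, one_rpow,
    ← Nat.cast_succ, rpow_natCast] at h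
  simp_rw [rpow_natCast] at h
  rw [h, one_div_mul_eq_div]

/-- `(x² - t²) e^{-t (x - t)}` on `x > t`, written in the coordinate `u = x - t`. -/
noncomputable def tailMajorant (t : ℝ) : ℝ → ℝ :=
  (Ioi 0).indicator fun u ↦ (u ^ 2 + 2 * t * u) * exp (-(t * u))

section tailMajorant

variable {t : ℝ}

lemma tailMajorant_nonneg (ht : 0 ≤ t) (u : ℝ) : 0 ≤ tailMajorant t u :=
  indicator_nonneg (fun u (hu : 0 < u) ↦ by positivity) u

lemma integrable_tailMajorant (ht : 0 < t) : Integrable (tailMajorant t) := by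
  have hsplit : (fun u ↦ (u ^ 2 + 2 * t * u) * exp (-(t * u))) =
      fun u ↦ u ^ 2 * exp (-(t * u)) + 2 * t * (u ^ 1 * exp (-(t * u))) := by
    ext u; ring
  rw [tailMajorant, integrable_indicator_iff measurableSet_Ioi, hsplit]
  exact (integrableOn_pow_mul_exp_neg_mul_Ioi 2 ht).add
    ((integrableOn_pow_mul_exp_neg_mul_Ioi 1 ht).const_mul (2 * t))

lemma integral_tailMajorant (ht : 0 < t) : ∫ u, tailMajorant t u = 2 / t ^ 3 + 2 / t := by
  have hsplit : (fun u ↦ (u ^ 2 + 2 * t * u) * exp (-(t * u))) =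
      fun u ↦ u ^ 2 * exp (-(t * u)) + 2 * t * (u ^ 1 * exp (-(t * u))) := by
    ext u; ring
  rw [tailMajorant, integral_indicator measurableSet_Ioi, hsplit,
    integral_add (integrableOn_pow_mul_exp_neg_mul_Ioi 2 ht)
      ((integrableOn_pow_mul_exp_neg_mul_Ioi 1 ht).const_mul (2 * t)), integral_const_mul,
    integral_pow_mul_exp_neg_mul_Ioi 2 ht, integral_pow_mul_exp_neg_mul_Ioi 1 ht]
  norm_num
  field_simp

lemma exp_neg_sq_div_two_le (x t : ℝ) :
    exp (-x ^ 2 / 2) ≤ exp (-t ^ 2 / 2) * exp (-(t * (x - t))) := by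
  rw [← exp_add, exp_le_exp]
  nlinarith [sq_nonneg (x - t)]

lemma max_sq_sub_sq_mul_exp_le_of_nonneg {x : ℝ} (ht : 0 ≤ t) (hx : 0 ≤ x) :
    max (x ^ 2 - t ^ 2) 0 * exp (-x ^ 2 / 2) ≤ exp (-t ^ 2 / 2) * tailMajorant t (x - t) := by
  rcases le_or_gt x t with hxt | hxt
  · rw [max_eq_right (by nlinarith), zero_mul]
    exact mul_nonneg (exp_nonneg _) (tailMajorant_nonneg ht _)
  · rw [max_eq_left (by nlinarith), tailMajorant,
      indicator_of_mem (show x - t ∈ Ioi 0 from sub_pos.2 hxt)]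
    calc (x ^ 2 - t ^ 2) * exp (-x ^ 2 / 2)
        ≤ (x ^ 2 - t ^ 2) * (exp (-t ^ 2 / 2) * exp (-(t * (x - t)))) :=
          mul_le_mul_of_nonneg_left (exp_neg_sq_div_two_le x t) (by nlinarith)
      _ = _ := by ring

lemma max_sq_sub_sq_mul_exp_le (ht : 0 ≤ t) (x : ℝ) :
    max (x ^ 2 - t ^ 2) 0 * exp (-x ^ 2 / 2) ≤
      exp (-t ^ 2 / 2) * (tailMajorant t (x - t) + tailMajorant t (-x - t)) := by
  have hpos := exp_nonneg (-t ^ 2 / 2)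
  rcases le_total 0 x with hx | hx
  · have := max_sq_sub_sq_mul_exp_le_of_nonneg ht hx
    nlinarith [tailMajorant_nonneg ht (-x - t)]
  · have := max_sq_sub_sq_mul_exp_le_of_nonneg ht (neg_nonneg.2 hx)
    rw [neg_sq] at this
    nlinarith [tailMajorant_nonneg ht (x - t)]

end tailMajorant

lemma gaussianPDFReal_zero_one (x : ℝ) :
    gaussianPDFReal 0 1 x = (√(2 * π))⁻¹ * exp (-x ^ 2 / 2) := by
  simp [gaussianPDFReal]

lemma integral_max_sq_sub_sq_gaussianReal_le {t : ℝ} (ht : 1 ≤ t) :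
    ∫ x, max (x ^ 2 - t ^ 2) 0 ∂(gaussianReal 0 1) ≤ 4 * exp (-t ^ 2 / 2) := by
  have ht0 : 0 < t := by linarith
  set c := (√(2 * π))⁻¹
  have hc : c ≤ 1 / 2 := by
    rw [one_div]
    refine inv_anti₀ two_pos ((le_sqrt zero_le_two (by positivity)).2 ?_)
    nlinarith [pi_gt_three]
  have hsum : 2 / t ^ 3 + 2 / t ≤ 4 := by
    linarith [div_le_self zero_le_two (one_le_pow₀ (n := 3) ht), div_le_self zero_le_two ht]
  have hshift := (integrable_tailMajorant ht0).comp_sub_right t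
  have hpoint (x : ℝ) : gaussianPDFReal 0 1 x • max (x ^ 2 - t ^ 2) 0 ≤
      c * exp (-t ^ 2 / 2) * (tailMajorant t (x - t) + tailMajorant t (-x - t)) := by
    rw [smul_eq_mul, gaussianPDFReal_zero_one, mul_right_comm, mul_assoc, mul_assoc]
    exact mul_le_mul_of_nonneg_left (max_sq_sub_sq_mul_exp_le ht0.le x) (by positivity)
  calc ∫ x, max (x ^ 2 - t ^ 2) 0 ∂(gaussianReal 0 1)
      = ∫ x, gaussianPDFReal 0 1 x • max (x ^ 2 - t ^ 2) 0 :=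
        integral_gaussianReal_eq_integral_smul one_ne_zero
    _ ≤ ∫ x, c * exp (-t ^ 2 / 2) * (tailMajorant t (x - t) + tailMajorant t (-x - t)) :=
        integral_mono_of_nonneg
          (ae_of_all _ fun x ↦ smul_nonneg (gaussianPDFReal_nonneg 0 1 x) (le_max_right _ _))
          ((hshift.add hshift.comp_neg).const_mul _) (ae_of_all _ hpoint)
    _ = c * exp (-t ^ 2 / 2) * (2 * (2 / t ^ 3 + 2 / t)) := by
        rw [integral_const_mul, integral_add hshift hshift.comp_neg, integral_sub_right_eq_self,
          integral_neg_eq_self (fun x ↦ tailMajorant t (x - t)), integral_sub_right_eq_self,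
          integral_tailMajorant ht0, two_mul]
    _ ≤ 4 * exp (-t ^ 2 / 2) := by
        have hcs : c * (2 / t ^ 3 + 2 / t) ≤ 1 / 2 * 4 :=
          mul_le_mul hc hsum (by positivity) (by norm_num)
        nlinarith [exp_pos (-t ^ 2 / 2)]

lemma setIntegral_sq_gaussianReal_le {T : Set ℝ} (hT : 0 < (gaussianReal 0 1).real T) :
    ∫ x in T, x ^ 2 ∂(gaussianReal 0 1) ≤
      (gaussianReal 0 1).real T * (4 - 2 * log ((gaussianReal 0 1).real T)) := by
  set α := (gaussianReal 0 1).real T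
  have hlog : log α ≤ 0 := log_nonpos hT.le measureReal_le_one
  set t := √(2 - 2 * log α)
  have ht2 : t ^ 2 = 2 - 2 * log α := sq_sqrt (by linarith)
  have ht1 : 1 ≤ t := (le_sqrt zero_le_one (by linarith)).2 (by linarith)
  have hexp : exp (-t ^ 2 / 2) = α * exp (-1) := by
    rw [ht2, show -(2 - 2 * log α) / 2 = log α + -1 by ring, exp_add, exp_log hT]
  have hexp1 : exp (-1) ≤ 1 / 2 := by
    rw [exp_neg, one_div]
    exact inv_anti₀ two_pos (by linarith [add_one_le_exp (1 : ℝ)])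
  have hsq : Integrable (fun x : ℝ ↦ x ^ 2) (gaussianReal 0 1) :=
    (memLp_id_gaussianReal 2).integrable_sq
  have hexcess : Integrable (fun x : ℝ ↦ max (x ^ 2 - t ^ 2) 0) (gaussianReal 0 1) :=
    (hsq.sub (integrable_const _)).pos_part
  calc ∫ x in T, x ^ 2 ∂(gaussianReal 0 1)
      ≤ ∫ x in T, (t ^ 2 + max (x ^ 2 - t ^ 2) 0) ∂(gaussianReal 0 1) :=
        setIntegral_mono hsq.integrableOn ((integrable_const _).add hexcess).integrableOn
          fun x ↦ by linarith [le_max_left (x ^ 2 - t ^ 2) 0]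
    _ = α * t ^ 2 + ∫ x in T, max (x ^ 2 - t ^ 2) 0 ∂(gaussianReal 0 1) := by
        rw [integral_add (integrable_const _).integrableOn hexcess.integrableOn, setIntegral_const,
          smul_eq_mul]
    _ ≤ α * t ^ 2 + ∫ x, max (x ^ 2 - t ^ 2) 0 ∂(gaussianReal 0 1) :=
        add_le_add le_rfl
          (setIntegral_le_integral hexcess (ae_of_all _ fun x ↦ le_max_right _ _))
    _ ≤ α * t ^ 2 + 4 * exp (-t ^ 2 / 2) :=
        add_le_add le_rfl (integral_max_sq_sub_sq_gaussianReal_le ht1)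
    _ ≤ α * (4 - 2 * log α) := by
        rw [hexp, ht2]
        nlinarith

lemma gaussianReal_map_const_mul_add (m c y : ℝ) (v : NNReal) :
    (gaussianReal m v).map (fun x ↦ c * x + y) =
      gaussianReal (c * m + y) (.mk (c ^ 2) (sq_nonneg _) * v) := by
  rw [show (fun x ↦ c * x + y) = (· + y) ∘ (c * ·) from rfl,
    ← Measure.map_map (by fun_prop) (by fun_prop), gaussianReal_map_const_mul,
    gaussianReal_map_add_const]

theorem stmt_0_general (μ σ : ℝ) (hσ : 0 < σ) (S : Set ℝ)
    (α : ℝ) (hα : α = (gaussianReal μ ⟨σ ^ 2, sq_nonneg σ⟩ S).toReal) (hαpos : 0 < α) :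
    (∫ y, (y - μ) ^ 2 ∂(ProbabilityTheory.cond (gaussianReal μ ⟨σ ^ 2, sq_nonneg σ⟩) S))
        ≤ (4 - 2 * Real.log α) * σ ^ 2 ∧
      (∫ y in S, (y - μ) ^ 2 ∂(gaussianReal μ ⟨σ ^ 2, sq_nonneg σ⟩))
        ≤ α * ((4 - 2 * Real.log α) * σ ^ 2) := by
  have hmap : (gaussianReal 0 1).map (fun x ↦ σ * x + μ) =
      gaussianReal μ ⟨σ ^ 2, sq_nonneg σ⟩ := by
    rw [gaussianReal_map_const_mul_add, mul_zero, zero_add, mul_one]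
    rfl
  have hemb : MeasurableEmbedding (fun x ↦ σ * x + μ) :=
    (Homeomorph.addRight μ).measurableEmbedding.comp
      (Homeomorph.mulLeft₀ σ hσ.ne').measurableEmbedding
  set T := (fun x ↦ σ * x + μ) ⁻¹' S
  have hαT : α = (gaussianReal 0 1).real T := by
    rw [hα, ← hmap, hemb.map_apply, measureReal_def]
  have hset : ∫ y in S, (y - μ) ^ 2 ∂(gaussianReal μ ⟨σ ^ 2, sq_nonneg σ⟩) =
      σ ^ 2 * ∫ x in T, x ^ 2 ∂(gaussianReal 0 1) := by
    rw [← hmap, hemb.setIntegral_map, ← integral_const_mul]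
    simp_rw [add_sub_cancel_right, mul_pow]
    rfl
  have hbound : ∫ y in S, (y - μ) ^ 2 ∂(gaussianReal μ ⟨σ ^ 2, sq_nonneg σ⟩) ≤
      α * ((4 - 2 * Real.log α) * σ ^ 2) := by
    have hstd := setIntegral_sq_gaussianReal_le (hαT ▸ hαpos)
    rw [← hαT] at hstd
    rw [hset]
    linarith [mul_le_mul_of_nonneg_left hstd (sq_nonneg σ)]
  refine ⟨?_, hbound⟩
  rw [ProbabilityTheory.cond, integral_smul_measure, ENNReal.toReal_inv, ← hα, smul_eq_mul,
    inv_mul_le_iff₀ hαpos]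
  exact hbound

/-- For a Gaussian `N(μ, σ²)` and a measurable set `S ⊆ ℝ` with survival
probability `α = N(μ,σ²)(S) > 0`, the second moment of the truncated Gaussian about the
untruncated mean `μ` satisfies `E_{y ~ N(μ,σ²,S)}[(y − μ)²] ≤ (4 − 2 log α) σ²`; equivalently
`∫_S (y − μ)² dN(μ,σ²)(y) ≤ α (4 − 2 log α) σ²`. -/
theorem stmt_0 (μ σ : ℝ) (hσ : 0 < σ) (S : Set ℝ) (hS : MeasurableSet S)
    (α : ℝ) (hα : α = (gaussianReal μ ⟨σ ^ 2, sq_nonneg σ⟩ S).toReal) (hαpos : 0 < α) :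
    (∫ y, (y - μ) ^ 2 ∂(ProbabilityTheory.cond (gaussianReal μ ⟨σ ^ 2, sq_nonneg σ⟩) S))
        ≤ (4 - 2 * Real.log α) * σ ^ 2 ∧
      (∫ y in S, (y - μ) ^ 2 ∂(gaussianReal μ ⟨σ ^ 2, sq_nonneg σ⟩))
        ≤ α * ((4 - 2 * Real.log α) * σ ^ 2) :=
  stmt_0_general μ σ hσ S α hα hαpos
end

section
/- Let X be a real symmetric k×k matrix with X ⪰ b·I for some b > 0, let σ > 0, and let w, v ∈ ℝᵏ and λ ∈ ℝ. Then σ²·(v − λw)ᵀ X (v − λw) + ½σ⁴λ² ≥ (b / (2b(1 + ‖w‖²/σ²) + 1)) · ( σ²·‖v‖² + σ⁴·λ² ), where ‖·‖ is the Euclidean norm. -/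
/-! Put `u = v - l • w`, so that `⟪u, X u⟫ ≥ b ‖u‖²`. Since `v = u + l • w`, the weighted triangle
inequality `ε ‖v‖² ≤ (1 + ε) (ε ‖u‖² + l² ‖w‖²)` with `ε = 2b (1 + ‖w‖²/σ²)` bounds `‖v‖²`; the
choice of `ε` makes its first term absorbed by `σ² b ‖u‖²` and its second by `σ⁴ l² / 2`. -/

open Matrix

lemma Matrix.mul_norm_sq_le_inner_toEuclideanLin {n : Type*} [Fintype n] [DecidableEq n]
    {X : Matrix n n ℝ} {b : ℝ} (hX : (X - b • (1 : Matrix n n ℝ)).PosSemidef)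
    (u : EuclideanSpace ℝ n) :
    b * ‖u‖ ^ 2 ≤ inner ℝ u (toEuclideanLin X u) := by
  have h := (isPositive_toEuclideanLin_iff.mpr hX).inner_nonneg_right u
  have h1 : toEuclideanLin (1 : Matrix n n ℝ) u = u := by simp
  rw [map_sub, map_smul, LinearMap.sub_apply, LinearMap.smul_apply, h1, inner_sub_right,
    inner_smul_right, real_inner_self_eq_norm_sq] at h
  linarith

/-- Weighted form of `‖x + y‖² ≤ (1 + ε) ‖x‖² + (1 + ε⁻¹) ‖y‖²`, valid for every real `ε`. -/
lemma mul_norm_add_sq_le {F : Type*} [NormedAddCommGroup F] [InnerProductSpace ℝ F]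
    (ε : ℝ) (x y : F) :
    ε * ‖x + y‖ ^ 2 ≤ (1 + ε) * (ε * ‖x‖ ^ 2 + ‖y‖ ^ 2) := by
  have hxy := norm_add_sq_real x y
  have hεxy := norm_sub_sq_real (ε • x) y
  rw [norm_smul, inner_smul_left, Real.norm_eq_abs, mul_pow, sq_abs] at hεxy
  simp only [conj_trivial] at hεxy
  linear_combination ε * hxy + hεxy + sq_nonneg ‖ε • x - y‖

theorem stmt_5_general {k : ℕ} (X : Matrix (Fin k) (Fin k) ℝ)
    (b : ℝ) (hb : 0 < b) (hX : (X - b • (1 : Matrix (Fin k) (Fin k) ℝ)).PosSemidef)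
    (σ : ℝ) (w v : EuclideanSpace ℝ (Fin k)) (l : ℝ) :
    (b / (2 * b * (1 + ‖w‖ ^ 2 / σ ^ 2) + 1)) * (σ ^ 2 * ‖v‖ ^ 2 + σ ^ 4 * l ^ 2)
      ≤ σ ^ 2 * (inner ℝ (v - l • w) (Matrix.toEuclideanLin X (v - l • w)) : ℝ)
        + σ ^ 4 * l ^ 2 / 2 := by
  set u := v - l • w
  set t := 1 + ‖w‖ ^ 2 / σ ^ 2
  have ht : 0 < t := by positivity
  have hquad := mul_norm_sq_le_inner_toEuclideanLin hX u
  have hv : 2 * b * t * ‖v‖ ^ 2 ≤ (2 * b * t + 1) * (2 * b * t * ‖u‖ ^ 2 + l ^ 2 * ‖w‖ ^ 2) := by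
    have := mul_norm_add_sq_le (2 * b * t) u (l • w)
    rwa [sub_add_cancel, norm_smul, Real.norm_eq_abs, mul_pow, sq_abs, add_comm 1] at this
  -- `σ² t = σ² + ‖w‖²` fails at `σ = 0`, but this multiple of it holds everywhere
  have hσt : σ ^ 4 * t = σ ^ 4 + σ ^ 2 * ‖w‖ ^ 2 := by
    rcases eq_or_ne σ 0 with rfl | hσ
    · simp
    · simp only [t]; field_simp
  clear_value t
  rw [div_mul_eq_mul_div, div_le_iff₀ (by positivity),
    ← mul_le_mul_iff_of_pos_left (by positivity : 0 < 2 * t)]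
  linear_combination σ ^ 2 * hv + (2 * t * (2 * b * t + 1) * σ ^ 2) * hquad
    - (2 * b * t + 1) * l ^ 2 * hσt + sq_nonneg (σ ^ 2 * l)

/-- If `X` is a real symmetric `k×k` matrix with `X ⪰ b·I`, `b > 0`, `σ > 0`,
`w, v ∈ ℝᵏ` and `λ ∈ ℝ`, then
`σ²·(v − λw)ᵀ X (v − λw) + ½σ⁴λ² ≥ (b / (2b(1 + ‖w‖²/σ²) + 1)) · (σ²‖v‖² + σ⁴λ²)`,
with `‖·‖` the Euclidean norm. The quadratic form `uᵀ X u` is written as the real inner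
product `⟪u, X u⟫` on `EuclideanSpace ℝ (Fin k)`. -/
theorem stmt_5 {k : ℕ} (X : Matrix (Fin k) (Fin k) ℝ) (hsym : X.IsSymm)
    (b : ℝ) (hb : 0 < b) (hX : (X - b • (1 : Matrix (Fin k) (Fin k) ℝ)).PosSemidef)
    (σ : ℝ) (hσ : 0 < σ) (w v : EuclideanSpace ℝ (Fin k)) (l : ℝ) :
    (b / (2 * b * (1 + ‖w‖ ^ 2 / σ ^ 2) + 1)) * (σ ^ 2 * ‖v‖ ^ 2 + σ ^ 4 * l ^ 2)
      ≤ σ ^ 2 * (inner ℝ (v - l • w) (Matrix.toEuclideanLin X (v - l • w)) : ℝ)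
        + σ ^ 4 * l ^ 2 / 2 :=
  stmt_5_general X b hb hX σ w v l
end

section
/- For every real q ≥ 1, the ratio of truncated Gaussian-weighted integrals satisfies (∫_q^∞ z⁴ e^{−z²/2} dz) / (∫_q^∞ e^{−z²/2} dz) ≤ 3 + 15q² + 5q⁴. -/
/-!
Integrating by parts twice against `z e^{-z²/2} = -(e^{-z²/2})'` gives
`∫_q^∞ z⁴ e^{-z²/2} = 3 ∫_q^∞ e^{-z²/2} + (q³ + 3q) e^{-q²/2}`, so the ratio is
`3 + (q³ + 3q) e^{-q²/2} / ∫_q^∞ e^{-z²/2}`. Gordon's lower bound on the Mills ratio,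
`∫_q^∞ e^{-z²/2} ≥ q / (1 + q²) · e^{-q²/2}`, obtained by differentiating
`-z / (1 + z²) · e^{-z²/2}`, bounds the second term by `(q³ + 3q)(1 + q²) / q`,
which is at most `15q² + 5q⁴` once `q ≥ 1`.
-/

open Set Real MeasureTheory Filter Topology

theorem integrable_pow_mul_exp_neg_sq_div_two (n : ℕ) :
    Integrable fun z : ℝ => z ^ n * exp (-z ^ 2 / 2) := by
  refine (integrable_rpow_mul_exp_neg_mul_sq (b := 1 / 2) (by norm_num)
    (s := n) (by linarith [n.cast_nonneg (α := ℝ)])).congr (.of_forall fun z => ?_)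
  simp only [rpow_natCast]
  ring_nf

theorem integrable_exp_neg_sq_div_two : Integrable fun z : ℝ => exp (-z ^ 2 / 2) := by
  simpa using integrable_pow_mul_exp_neg_sq_div_two 0

theorem tendsto_pow_mul_exp_neg_sq_div_two_atTop (n : ℕ) :
    Tendsto (fun z : ℝ => z ^ n * exp (-z ^ 2 / 2)) atTop (𝓝 0) := by
  have h := (rpow_mul_exp_neg_mul_sq_isLittleO_exp_neg (b := 1 / 2) (by norm_num) n).trans_tendsto
    (tendsto_exp_atBot.comp (tendsto_id.const_mul_atTop_of_neg (by norm_num)))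
  refine h.congr fun z => ?_
  simp only [rpow_natCast]
  ring_nf

theorem hasDerivAt_exp_neg_sq_div_two (x : ℝ) :
    HasDerivAt (fun z : ℝ => exp (-z ^ 2 / 2)) (-x * exp (-x ^ 2 / 2)) x := by
  have h : HasDerivAt (fun z : ℝ => -z ^ 2 / 2) (-x) x :=
    ((hasDerivAt_pow 2 x).fun_neg.div_const 2).congr_deriv (by ring)
  exact h.exp.congr_deriv (by ring)

theorem integral_Ioi_pow_four_mul_exp_neg_sq_div_two (q : ℝ) :
    ∫ z in Ioi q, z ^ 4 * exp (-z ^ 2 / 2)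
      = 3 * (∫ z in Ioi q, exp (-z ^ 2 / 2)) + (q ^ 3 + 3 * q) * exp (-q ^ 2 / 2) := by
  have hderiv : ∀ x ∈ Ici q, HasDerivAt (fun z : ℝ => -(z ^ 3 + 3 * z) * exp (-z ^ 2 / 2))
      (x ^ 4 * exp (-x ^ 2 / 2) - 3 * exp (-x ^ 2 / 2)) x := fun x _ =>
    (((hasDerivAt_pow 3 x).fun_add ((hasDerivAt_id' x).const_mul 3)).fun_neg.fun_mul
      (hasDerivAt_exp_neg_sq_div_two x)).congr_deriv (by ring)
  have h4 := (integrable_pow_mul_exp_neg_sq_div_two 4).integrableOn (s := Ioi q)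
  have h0 := (integrable_exp_neg_sq_div_two.integrableOn (s := Ioi q)).const_mul 3
  have htend : Tendsto (fun z : ℝ => -(z ^ 3 + 3 * z) * exp (-z ^ 2 / 2)) atTop (𝓝 0) := by
    have h := ((tendsto_pow_mul_exp_neg_sq_div_two_atTop 3).add
      ((tendsto_pow_mul_exp_neg_sq_div_two_atTop 1).const_mul 3)).neg
    simp only [mul_zero, add_zero, neg_zero] at h
    exact h.congr fun z => by ring
  have hftc := integral_Ioi_of_hasDerivAt_of_tendsto' hderiv (h4.sub h0) htend
  rw [integral_sub h4 h0, integral_const_mul] at hftc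
  linarith

theorem div_one_add_sq_mul_exp_le_integral_Ioi_exp_neg_sq_div_two (q : ℝ) :
    q / (1 + q ^ 2) * exp (-q ^ 2 / 2) ≤ ∫ z in Ioi q, exp (-z ^ 2 / 2) := by
  have hderiv : ∀ x ∈ Ici q, HasDerivAt (fun z : ℝ => -(z / (1 + z ^ 2)) * exp (-z ^ 2 / 2))
      (exp (-x ^ 2 / 2) - 2 / (1 + x ^ 2) ^ 2 * exp (-x ^ 2 / 2)) x := fun x _ => by
    have hx : 1 + x ^ 2 ≠ 0 := by positivity
    refine (((hasDerivAt_id' x).fun_div ((hasDerivAt_pow 2 x).const_add 1) hx).fun_neg.fun_mul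
      (hasDerivAt_exp_neg_sq_div_two x)).congr_deriv ?_
    field_simp
    ring
  have hE := integrable_exp_neg_sq_div_two.integrableOn (s := Ioi q)
  have hweight : IntegrableOn (fun z : ℝ => 2 / (1 + z ^ 2) ^ 2 * exp (-z ^ 2 / 2)) (Ioi q) := by
    refine hE.bdd_mul (c := 2)
      (continuous_const.div (by fun_prop) fun z => by positivity).aestronglyMeasurable
      (.of_forall fun z => ?_)
    have h1 : 1 ≤ (1 + z ^ 2) ^ 2 := one_le_pow₀ (by nlinarith)
    rw [norm_div, Real.norm_two, Real.norm_of_nonneg (by positivity)]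
    exact div_le_self zero_le_two h1
  have htend : Tendsto (fun z : ℝ => -(z / (1 + z ^ 2)) * exp (-z ^ 2 / 2)) atTop (𝓝 0) := by
    have hinv : Tendsto (fun z : ℝ => (1 + z ^ 2)⁻¹) atTop (𝓝 0) :=
      tendsto_inv_atTop_zero.comp
        (tendsto_atTop_add_const_left _ 1 (tendsto_pow_atTop two_ne_zero))
    have h := (hinv.mul (tendsto_pow_mul_exp_neg_sq_div_two_atTop 1)).neg
    simp only [zero_mul, neg_zero] at h
    exact h.congr fun z => by ring
  have hftc := integral_Ioi_of_hasDerivAt_of_tendsto' hderiv (hE.sub hweight) htend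
  have hnonneg : 0 ≤ ∫ z in Ioi q, 2 / (1 + z ^ 2) ^ 2 * exp (-z ^ 2 / 2) :=
    setIntegral_nonneg measurableSet_Ioi fun z _ => by positivity
  rw [integral_sub hE hweight] at hftc
  linarith

/-- For every real `q ≥ 1`,
`(∫_q^∞ z⁴ e^{−z²/2} dz) / (∫_q^∞ e^{−z²/2} dz) ≤ 3 + 15q² + 5q⁴`. -/
theorem stmt_12 (q : ℝ) (hq : 1 ≤ q) :
    (∫ z in Set.Ioi q, z ^ 4 * Real.exp (-z ^ 2 / 2))
        / (∫ z in Set.Ioi q, Real.exp (-z ^ 2 / 2))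
      ≤ 3 + 15 * q ^ 2 + 5 * q ^ 4 := by
  have hparts := integral_Ioi_pow_four_mul_exp_neg_sq_div_two q
  set I := ∫ z in Ioi q, exp (-z ^ 2 / 2)
  have hgordon : q / (1 + q ^ 2) * exp (-q ^ 2 / 2) ≤ I :=
    div_one_add_sq_mul_exp_le_integral_Ioi_exp_neg_sq_div_two q
  have hIpos : 0 < I := lt_of_lt_of_le (by positivity) hgordon
  have hpoly : q ^ 3 + 3 * q ≤ (15 * q ^ 2 + 5 * q ^ 4) * (q / (1 + q ^ 2)) := by
    rw [mul_div_assoc', le_div_iff₀ (by positivity)]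
    nlinarith [pow_le_pow_left₀ zero_le_one hq 4]
  rw [div_le_iff₀ hIpos, hparts]
  calc 3 * I + (q ^ 3 + 3 * q) * exp (-q ^ 2 / 2)
      ≤ 3 * I + (15 * q ^ 2 + 5 * q ^ 4) * (q / (1 + q ^ 2) * exp (-q ^ 2 / 2)) := by
        rw [← mul_assoc]; gcongr
    _ ≤ 3 * I + (15 * q ^ 2 + 5 * q ^ 4) * I := by gcongr
    _ = (3 + 15 * q ^ 2 + 5 * q ^ 4) * I := by ring
end

section
/- Let a ∈ (0,1), let S ⊆ ℝ be measurable with ∫_S e^{−x²/2} dx ≥ a·√(2π) (i.e. the standard Gaussian measure of S is at least a), and let q > 0 satisfy ∫_q^∞ e^{−x²/2} dx = a/2. Then the conditional fourth moment satisfies (∫_S x⁴ e^{−x²/2} dx) / (∫_S e^{−x²/2} dx) ≤ (∫_q^∞ x⁴ e^{−x²/2} dx) / (a/2). -/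
open MeasureTheory Set Real

private lemma int_w13 : Integrable (fun x : ℝ => Real.exp (-x ^ 2 / 2)) := by
  have h := integrable_exp_neg_mul_sq (by norm_num : (0:ℝ) < 1/2)
  have e : (fun x : ℝ => Real.exp (-x ^ 2 / 2)) = fun x : ℝ => Real.exp (-(1/2) * x ^ 2) := by
    funext x; ring_nf
  rw [e]; exact h

private lemma int_f13 : Integrable (fun x : ℝ => x ^ 4 * Real.exp (-x ^ 2 / 2)) := by
  have h := integrable_rpow_mul_exp_neg_mul_sq (by norm_num : (0:ℝ) < 1/2)
    (by norm_num : (-1:ℝ) < 4)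
  have e : (fun x : ℝ => x ^ 4 * Real.exp (-x ^ 2 / 2))
      = fun x : ℝ => x ^ (4:ℝ) * Real.exp (-(1/2) * x ^ 2) := by
    funext x
    rw [show ((4:ℝ) = ((4:ℕ):ℝ)) by norm_num, Real.rpow_natCast]
    ring_nf
  rw [e]; exact h

/-- Let `a ∈ (0,1)`, let `S ⊆ ℝ` be measurable with
`∫_S e^{−x²/2} dx ≥ a√(2π)` (standard Gaussian mass of `S` at least `a`), and let `q > 0`
satisfy `∫_q^∞ e^{−x²/2} dx = a/2`. Then
`(∫_S x⁴ e^{−x²/2} dx) / (∫_S e^{−x²/2} dx) ≤ (∫_q^∞ x⁴ e^{−x²/2} dx) / (a/2)`. -/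
theorem stmt_13 (a : ℝ) (ha0 : 0 < a) (ha1 : a < 1) (S : Set ℝ) (hS : MeasurableSet S)
    (hSmass : a * Real.sqrt (2 * Real.pi) ≤ ∫ x in S, Real.exp (-x ^ 2 / 2))
    (q : ℝ) (hq : 0 < q) (hqa : (∫ x in Set.Ioi q, Real.exp (-x ^ 2 / 2)) = a / 2) :
    (∫ x in S, x ^ 4 * Real.exp (-x ^ 2 / 2)) / (∫ x in S, Real.exp (-x ^ 2 / 2))
      ≤ (∫ x in Set.Ioi q, x ^ 4 * Real.exp (-x ^ 2 / 2)) / (a / 2) := by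
  set w : ℝ → ℝ := fun x => Real.exp (-x ^ 2 / 2) with hw
  set f : ℝ → ℝ := fun x => x ^ 4 * Real.exp (-x ^ 2 / 2) with hf
  have hwpos : ∀ x, 0 < w x := fun x => Real.exp_pos _
  have hfnn : ∀ x, 0 ≤ f x := fun x => mul_nonneg (by positivity) (Real.exp_pos _).le
  -- reflections
  have hwrefl : (∫ x in Iio (-q), w x) = a / 2 := by
    rw [show (∫ x in Iio (-q), w x) = ∫ x in Ioi q, w (-x) by
      rw [integral_comp_neg_Ioi, ← integral_Iic_eq_integral_Iio]]
    rw [← hqa]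
    refine setIntegral_congr_fun measurableSet_Ioi (fun x _ => ?_)
    simp only [hw, neg_sq]
  have hfrefl : (∫ x in Iio (-q), f x) = ∫ x in Ioi q, f x := by
    rw [show (∫ x in Iio (-q), f x) = ∫ x in Ioi q, f (-x) by
      rw [integral_comp_neg_Ioi, ← integral_Iic_eq_integral_Iio]]
    refine setIntegral_congr_fun measurableSet_Ioi (fun x _ => ?_)
    simp only [hf, neg_sq]
    ring_nf
  -- the two-sided tail
  set T : Set ℝ := Iio (-q) ∪ Ioi q with hT
  have hTm : MeasurableSet T := measurableSet_Iio.union measurableSet_Ioi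
  have hdisj : Disjoint (Iio (-q)) (Ioi q) :=
    Set.disjoint_left.mpr (fun x hx hx' => by
      simp only [mem_Iio] at hx; simp only [mem_Ioi] at hx'; linarith)
  have hTw : (∫ x in T, w x) = a := by
    rw [hT, setIntegral_union hdisj measurableSet_Ioi int_w13.integrableOn int_w13.integrableOn,
      hwrefl, hqa]
    ring
  have hTf : (∫ x in T, f x) = 2 * ∫ x in Ioi q, f x := by
    rw [hT, setIntegral_union hdisj measurableSet_Ioi int_f13.integrableOn int_f13.integrableOn,
      hfrefl]
    ring
  -- on T, q^4 ≤ x^4 ; off T, x^4 ≤ q^4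
  have hbigT : ∀ x ∈ T, q ^ 4 * w x ≤ f x := by
    intro x hx
    have hx4 : q ^ 4 ≤ x ^ 4 := by
      rcases hx with hx | hx
      · simp only [mem_Iio] at hx
        have hx2 : q ^ 2 ≤ x ^ 2 := by nlinarith
        nlinarith [hx2, sq_nonneg x, sq_nonneg q]
      · simp only [mem_Ioi] at hx
        have hx2 : q ^ 2 ≤ x ^ 2 := by nlinarith
        nlinarith [hx2, sq_nonneg x, sq_nonneg q]
    exact mul_le_mul_of_nonneg_right hx4 (hwpos x).le
  have hsmallTc : ∀ x, x ∉ T → f x ≤ q ^ 4 * w x := by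
    intro x hx
    simp only [hT, mem_union, mem_Iio, mem_Ioi, not_or, not_lt] at hx
    have hx4 : x ^ 4 ≤ q ^ 4 := by
      have hx2 : x ^ 2 ≤ q ^ 2 := by nlinarith [hx.1, hx.2]
      nlinarith [hx2, sq_nonneg x, sq_nonneg q]
    exact mul_le_mul_of_nonneg_right hx4 (hwpos x).le
  -- lower bound on tail fourth moment
  have hIq : q ^ 4 * (a / 2) ≤ ∫ x in Ioi q, f x := by
    rw [← hqa, ← integral_const_mul]
    refine setIntegral_mono_on (int_w13.integrableOn.const_mul _) int_f13.integrableOn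
      measurableSet_Ioi (fun x hx => hbigT x (Or.inr hx))
  -- masses
  have hsqrt : (1:ℝ) ≤ Real.sqrt (2 * Real.pi) := by
    rw [show (1:ℝ) = Real.sqrt 1 by simp]
    exact Real.sqrt_le_sqrt (by nlinarith [Real.pi_gt_three])
  have haA : a ≤ ∫ x in S, w x := le_trans (by nlinarith) hSmass
  have hA : 0 < ∫ x in S, w x := lt_of_lt_of_le ha0 haA
  -- decompositions
  have hSdec : (∫ x in S ∩ T, f x) + ∫ x in S \ T, f x = ∫ x in S, f x :=
    integral_inter_add_diff hTm int_f13.integrableOn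
  have hSwdec : (∫ x in S ∩ T, w x) + ∫ x in S \ T, w x = ∫ x in S, w x :=
    integral_inter_add_diff hTm int_w13.integrableOn
  have hTdec : (∫ x in T ∩ S, f x) + ∫ x in T \ S, f x = ∫ x in T, f x :=
    integral_inter_add_diff hS int_f13.integrableOn
  have hTwdec : (∫ x in T ∩ S, w x) + ∫ x in T \ S, w x = ∫ x in T, w x :=
    integral_inter_add_diff hS int_w13.integrableOn
  have hcomm : S ∩ T = T ∩ S := inter_comm S T
  -- pointwise bounds integrated
  have h1 : (∫ x in S \ T, f x) ≤ q ^ 4 * ∫ x in S \ T, w x := by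
    rw [← integral_const_mul]
    refine setIntegral_mono_on int_f13.integrableOn (int_w13.integrableOn.const_mul _)
      (hS.diff hTm) (fun x hx => hsmallTc x hx.2)
  have h2 : q ^ 4 * (∫ x in T \ S, w x) ≤ ∫ x in T \ S, f x := by
    rw [← integral_const_mul]
    refine setIntegral_mono_on (int_w13.integrableOn.const_mul _) int_f13.integrableOn
      (hTm.diff hS) (fun x hx => hbigT x hx.1)
  -- main bound : ∫_S f ≤ 2I + q^4 (A - a)
  have hmain : (∫ x in S, f x)
      ≤ 2 * (∫ x in Ioi q, f x) + q ^ 4 * ((∫ x in S, w x) - a) := by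
    rw [← hSdec, hcomm]
    have e1 : (∫ x in T ∩ S, f x) = (∫ x in T, f x) - ∫ x in T \ S, f x := by linarith
    have e2 : (∫ x in T ∩ S, w x) = a - ∫ x in T \ S, w x := by
      rw [hTw] at hTwdec; linarith
    rw [e1, hTf]
    rw [hcomm] at hSwdec
    have e3 : (∫ x in S \ T, w x) = ((∫ x in S, w x) - a) + ∫ x in T \ S, w x := by
      linarith
    rw [e3] at h1
    have expand : q ^ 4 * (((∫ x in S, w x) - a) + ∫ x in T \ S, w x)
        = q ^ 4 * ((∫ x in S, w x) - a) + q ^ 4 * ∫ x in T \ S, w x := by ring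
    rw [expand] at h1
    linarith
  -- conclude
  rw [div_le_div_iff₀ hA (by positivity : (0:ℝ) < a / 2)]
  have hkey : 0 ≤ ((∫ x in S, w x) - a) * ((∫ x in Ioi q, f x) - q ^ 4 * (a / 2)) :=
    mul_nonneg (by linarith) (by linarith)
  nlinarith [mul_le_mul_of_nonneg_right hmain (by linarith : (0:ℝ) ≤ a / 2)]
end

section
/- There is a universal constant C > 0 with the following property. For every μ ∈ ℝ, σ > 0, a ∈ (0, 1), and measurable S ⊆ ℝ with survival probability N(μ,σ²)(S) ≥ a, the random variable z distributed as the truncated Gaussian N(μ,σ²,S) satisfies Var(z²) ≤ C·( μ²σ²·(1 + log(1/a)) + σ⁴·(1 + log(1/a))² ). -/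
/-!
Conditioning on `S` multiplies expectations of nonnegative functions by at most `1 / a`.
The Gaussian has the exponential square moment `E exp (3 (z - μ)² / (8 σ²)) = 2`, so under
the truncated law `Y = 3 (z - μ)² / (8 σ²)` satisfies `E exp Y ≤ 2 / a`. The elementary
inequalities `u ≤ t + exp (u - t)` and `u² ≤ 2 t² + 4 exp (u - t)` at `t = log (2 / a)`
turn this into `E Y ≤ log (2 / a) + 1` and `E Y² ≤ 2 log² (2 / a) + 4`, and it remains to
bound `Var (z²) ≤ E (z² - μ²)² ≤ 8 μ² E (z - μ)² + 2 E (z - μ)⁴`.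
-/

open MeasureTheory ProbabilityTheory Real
open scoped NNReal

lemma le_add_exp_sub (u t : ℝ) : u ≤ t + exp (u - t) := by
  linarith [add_one_le_exp (u - t)]

lemma sq_le_two_mul_sq_add_four_mul_exp_sub {u : ℝ} (hu : 0 ≤ u) (t : ℝ) :
    u ^ 2 ≤ 2 * t ^ 2 + 4 * exp (u - t) := by
  rcases le_or_gt u t with hut | htu
  · nlinarith [exp_pos (u - t)]
  · nlinarith [quadratic_le_exp_of_nonneg (sub_nonneg.2 htu.le), sq_nonneg (2 * t - u)]

section Conditioning

variable {Ω : Type*} [MeasurableSpace Ω] {P : Measure Ω} {s : Set Ω} {f : Ω → ℝ}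

lemma MeasureTheory.Integrable.cond (hf : Integrable f P) (s : Set Ω) : Integrable f P[|s] := by
  by_cases hs : P s = 0
  · simp [cond_eq_zero_of_meas_eq_zero hs]
  · exact hf.restrict.smul_measure (ENNReal.inv_ne_top.2 hs)

lemma integral_cond_le (hf : Integrable f P) (hf0 : 0 ≤ᵐ[P] f) :
    ∫ ω, f ω ∂P[|s] ≤ (P s).toReal⁻¹ * ∫ ω, f ω ∂P := by
  rw [ProbabilityTheory.cond, integral_smul_measure, smul_eq_mul, ENNReal.toReal_inv]
  exact mul_le_mul_of_nonneg_left (setIntegral_le_integral hf hf0) (by positivity)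

end Conditioning

lemma integral_exp_mul_sq_sub_gaussianReal (μ : ℝ) {v : ℝ≥0} (hv : v ≠ 0) {b : ℝ}
    (hb : 2 * v * b < 1) :
    ∫ x, exp (b * (x - μ) ^ 2) ∂gaussianReal μ v = (√(1 - 2 * v * b))⁻¹ := by
  have hv' : (0 : ℝ) < v := by positivity
  have hc : (2 * v : ℝ)⁻¹ - b = (1 - 2 * v * b) / (2 * v) := by field_simp
  have hdens : ∀ x, gaussianPDFReal μ v x • exp (b * (x - μ) ^ 2)
      = (√(2 * π * v))⁻¹ * exp (-((2 * v : ℝ)⁻¹ - b) * (x - μ) ^ 2) := fun x => by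
    rw [gaussianPDFReal, smul_eq_mul, mul_assoc, ← exp_add]
    congr 2
    field_simp
    ring
  rw [integral_gaussianReal_eq_integral_smul hv]
  simp_rw [hdens, integral_const_mul]
  rw [integral_sub_right_eq_self (fun x => exp (-((2 * v : ℝ)⁻¹ - b) * x ^ 2)) μ,
    integral_gaussian, hc, div_div_eq_mul_div, sqrt_div' _ (by linarith),
    show π * (2 * v) = 2 * π * v by ring]
  have : 0 < √(2 * π * v) := by positivity
  field_simp

lemma integrable_exp_mul_sq_sub_gaussianReal (μ : ℝ) {v : ℝ≥0} (hv : v ≠ 0) {b : ℝ}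
    (hb : 2 * v * b < 1) :
    Integrable (fun x => exp (b * (x - μ) ^ 2)) (gaussianReal μ v) :=
  .of_integral_ne_zero <| by
    rw [integral_exp_mul_sq_sub_gaussianReal μ hv hb]
    exact inv_ne_zero (sqrt_pos.2 (by linarith)).ne'

section ExponentialMoment

variable {Ω : Type*} [MeasurableSpace Ω] {ν : Measure Ω} {Y : Ω → ℝ} {K : ℝ}

lemma integrable_pow_of_integrable_exp (hYm : AEStronglyMeasurable Y ν) (hY : 0 ≤ Y)
    (hexp : Integrable (fun ω => exp (Y ω)) ν) (n : ℕ) :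
    Integrable (fun ω => Y ω ^ n) ν :=
  (hexp.const_mul n.factorial).mono' (hYm.pow n) <| ae_of_all _ fun ω => by
    rw [norm_of_nonneg (pow_nonneg (hY ω) n), ← div_le_iff₀' (by positivity)]
    exact pow_div_factorial_le_exp _ (hY ω) n

variable [IsProbabilityMeasure ν]

lemma integral_le_log_add_one_of_integral_exp_le (hY : 0 ≤ Y)
    (hexp : Integrable (fun ω => exp (Y ω)) ν) (hK : ∫ ω, exp (Y ω) ∂ν ≤ K) :
    ∫ ω, Y ω ∂ν ≤ log K + 1 := by
  have hK0 : 0 < K := (integral_exp_pos hexp).trans_le hK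
  have hpt : ∀ ω, Y ω ≤ log K + K⁻¹ * exp (Y ω) := fun ω => by
    simpa [exp_sub, exp_log hK0, div_eq_inv_mul] using le_add_exp_sub (Y ω) (log K)
  calc ∫ ω, Y ω ∂ν ≤ ∫ ω, (log K + K⁻¹ * exp (Y ω)) ∂ν :=
        integral_mono_of_nonneg (ae_of_all _ hY) ((integrable_const _).add (hexp.const_mul _))
          (ae_of_all _ hpt)
    _ = log K + K⁻¹ * ∫ ω, exp (Y ω) ∂ν := by
        rw [integral_add (integrable_const _) (hexp.const_mul _), integral_const_mul]
        simp
    _ ≤ log K + 1 := by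
        have := mul_le_mul_of_nonneg_left hK (inv_nonneg.2 hK0.le)
        rw [inv_mul_cancel₀ hK0.ne'] at this
        linarith

lemma integral_sq_le_of_integral_exp_le (hY : 0 ≤ Y)
    (hexp : Integrable (fun ω => exp (Y ω)) ν) (hK : ∫ ω, exp (Y ω) ∂ν ≤ K) :
    ∫ ω, Y ω ^ 2 ∂ν ≤ 2 * log K ^ 2 + 4 := by
  have hK0 : 0 < K := (integral_exp_pos hexp).trans_le hK
  have hpt : ∀ ω, Y ω ^ 2 ≤ 2 * log K ^ 2 + 4 * K⁻¹ * exp (Y ω) := fun ω => by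
    simpa [exp_sub, exp_log hK0, div_eq_inv_mul, mul_assoc] using
      sq_le_two_mul_sq_add_four_mul_exp_sub (hY ω) (log K)
  calc ∫ ω, Y ω ^ 2 ∂ν ≤ ∫ ω, (2 * log K ^ 2 + 4 * K⁻¹ * exp (Y ω)) ∂ν :=
        integral_mono_of_nonneg (ae_of_all _ fun ω => sq_nonneg _)
          ((integrable_const _).add (hexp.const_mul _)) (ae_of_all _ hpt)
    _ = 2 * log K ^ 2 + 4 * K⁻¹ * ∫ ω, exp (Y ω) ∂ν := by
        rw [integral_add (integrable_const _) (hexp.const_mul _), integral_const_mul (4 * K⁻¹)]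
        simp
    _ ≤ 2 * log K ^ 2 + 4 := by
        have := mul_le_mul_of_nonneg_left hK (inv_nonneg.2 hK0.le)
        rw [inv_mul_cancel₀ hK0.ne'] at this
        nlinarith

end ExponentialMoment

section TruncatedGaussian

variable {μ : ℝ} {v : ℝ≥0} {S : Set ℝ} {a : ℝ}

lemma two_mul_mul_three_div_eight_lt_one (hv : v ≠ 0) : 2 * v * (3 / (8 * v)) < (1 : ℝ) := by
  field_simp
  norm_num

lemma integral_exp_cond_gaussianReal_le (hv : v ≠ 0) (ha : 0 < a)
    (haS : a ≤ (gaussianReal μ v S).toReal) :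
    ∫ x, exp (3 / (8 * v) * (x - μ) ^ 2) ∂(gaussianReal μ v)[|S] ≤ 2 / a := by
  have hb := two_mul_mul_three_div_eight_lt_one hv
  have hint : ∫ x, exp (3 / (8 * v) * (x - μ) ^ 2) ∂gaussianReal μ v = 2 := by
    rw [integral_exp_mul_sq_sub_gaussianReal μ hv hb,
      show 1 - 2 * v * (3 / (8 * v)) = ((1 : ℝ) / 2) ^ 2 by field_simp; norm_num,
      sqrt_sq (by norm_num)]
    norm_num
  calc ∫ x, exp (3 / (8 * v) * (x - μ) ^ 2) ∂(gaussianReal μ v)[|S]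
      ≤ (gaussianReal μ v S).toReal⁻¹ * 2 := by
        rw [← hint]
        exact integral_cond_le (integrable_exp_mul_sq_sub_gaussianReal μ hv hb)
          (ae_of_all _ fun x => (exp_pos _).le)
    _ ≤ a⁻¹ * 2 := by gcongr
    _ = 2 / a := by ring

lemma integral_sq_sub_sq_cond_gaussianReal_le (hv : v ≠ 0) (ha : 0 < a)
    (haS : a ≤ (gaussianReal μ v S).toReal) :
    ∫ x, (x ^ 2 - μ ^ 2) ^ 2 ∂(gaussianReal μ v)[|S]
      ≤ 64 / 3 * μ ^ 2 * v * (log (2 / a) + 1)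
        + 128 / 9 * v ^ 2 * (2 * log (2 / a) ^ 2 + 4) := by
  have hS : gaussianReal μ v S ≠ 0 := fun h => by simp [h] at haS; linarith
  set ν := (gaussianReal μ v)[|S]
  have : IsProbabilityMeasure ν := cond_isProbabilityMeasure hS
  set Y : ℝ → ℝ := fun x => 3 / (8 * v) * (x - μ) ^ 2
  have hY : 0 ≤ Y := fun x => by positivity
  have hYm : AEStronglyMeasurable Y ν := by fun_prop
  have hexp : Integrable (fun x => exp (Y x)) ν :=
    (integrable_exp_mul_sq_sub_gaussianReal μ hv (two_mul_mul_three_div_eight_lt_one hv)).cond S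
  have hK := integral_exp_cond_gaussianReal_le hv ha haS
  have hpt (x : ℝ) :
      (x ^ 2 - μ ^ 2) ^ 2 ≤ 64 / 3 * μ ^ 2 * v * Y x + 128 / 9 * v ^ 2 * Y x ^ 2 := by
    have hv' : (0 : ℝ) < v := by positivity
    have : (8 * v / 3) * Y x = (x - μ) ^ 2 := by simp only [Y]; field_simp
    nlinarith [sq_nonneg (x - μ - 2 * μ)]
  have hY1 : Integrable Y ν := by simpa using integrable_pow_of_integrable_exp hYm hY hexp 1
  have hY2 := integrable_pow_of_integrable_exp hYm hY hexp 2
  calc ∫ x, (x ^ 2 - μ ^ 2) ^ 2 ∂ν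
      ≤ ∫ x, (64 / 3 * μ ^ 2 * v * Y x + 128 / 9 * v ^ 2 * Y x ^ 2) ∂ν :=
        integral_mono_of_nonneg (ae_of_all _ fun x => sq_nonneg _)
          ((hY1.const_mul _).add (hY2.const_mul _)) (ae_of_all _ hpt)
    _ = 64 / 3 * μ ^ 2 * v * ∫ x, Y x ∂ν + 128 / 9 * v ^ 2 * ∫ x, Y x ^ 2 ∂ν := by
        rw [integral_add (hY1.const_mul _) (hY2.const_mul _),
          integral_const_mul (64 / 3 * μ ^ 2 * v), integral_const_mul (128 / 9 * v ^ 2 : ℝ)]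
    _ ≤ _ := by
        gcongr
        · exact integral_le_log_add_one_of_integral_exp_le hY hexp hK
        · exact integral_sq_le_of_integral_exp_le hY hexp hK

lemma variance_sq_cond_gaussianReal_le (hv : v ≠ 0) (ha : 0 < a) (ha1 : a < 1)
    (haS : a ≤ (gaussianReal μ v S).toReal) :
    Var[fun z => z ^ 2; (gaussianReal μ v)[|S]]
      ≤ 86 * (μ ^ 2 * v * (1 + log (1 / a)) + v ^ 2 * (1 + log (1 / a)) ^ 2) := by
  have hS : gaussianReal μ v S ≠ 0 := fun h => by simp [h] at haS; linarith
  have := cond_isProbabilityMeasure (s := S) hS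
  have hL : 0 ≤ log (1 / a) := log_nonneg (by rw [le_div_iff₀ ha]; linarith)
  have hlog : log (2 / a) = log 2 + log (1 / a) := by
    rw [← log_mul two_ne_zero (by positivity), mul_one_div]
  have hlog2 : log 2 < 1 := by linarith [log_two_lt_d9]
  have hlog2' : 0 < log 2 := log_pos one_lt_two
  calc Var[fun z => z ^ 2; (gaussianReal μ v)[|S]]
      = Var[fun z => z ^ 2 - μ ^ 2; (gaussianReal μ v)[|S]] :=
        (variance_sub_const (by fun_prop) _).symm
    _ ≤ ∫ z, (z ^ 2 - μ ^ 2) ^ 2 ∂(gaussianReal μ v)[|S] :=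
        variance_le_expectation_sq (by fun_prop)
    _ ≤ _ := (integral_sq_sub_sq_cond_gaussianReal_le hv ha haS).trans ?_
  have hμv : 0 ≤ μ ^ 2 * v := by positivity
  have h1 : 64 / 3 * μ ^ 2 * v * (log (2 / a) + 1)
      ≤ 128 / 3 * (μ ^ 2 * v * (1 + log (1 / a))) := by
    nlinarith
  have h2 : 128 / 9 * v ^ 2 * (2 * log (2 / a) ^ 2 + 4)
      ≤ 256 / 3 * (v ^ 2 * (1 + log (1 / a)) ^ 2) := by
    have : 2 * log (2 / a) ^ 2 + 4 ≤ 6 * (1 + log (1 / a)) ^ 2 := by nlinarith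
    nlinarith [sq_nonneg (v : ℝ)]
  nlinarith [sq_nonneg (v : ℝ), sq_nonneg (1 + log (1 / a))]

end TruncatedGaussian

/-- There is a universal constant `C > 0` such that for all `μ ∈ ℝ`,
`σ > 0`, `a ∈ (0,1)` and measurable `S ⊆ ℝ` with `N(μ,σ²)(S) ≥ a`, the truncated Gaussian
`z ~ N(μ,σ²,S)` satisfies
`Var(z²) ≤ C·(μ²σ²(1 + log(1/a)) + σ⁴(1 + log(1/a))²)`. -/
theorem stmt_14 :
    ∃ C : ℝ, 0 < C ∧ ∀ (μ σ a : ℝ), 0 < σ → 0 < a → a < 1 →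
      ∀ S : Set ℝ, MeasurableSet S →
        a ≤ (gaussianReal μ ⟨σ ^ 2, sq_nonneg σ⟩ S).toReal →
        variance (fun z => z ^ 2)
            (ProbabilityTheory.cond (gaussianReal μ ⟨σ ^ 2, sq_nonneg σ⟩) S)
          ≤ C * (μ ^ 2 * σ ^ 2 * (1 + Real.log (1 / a))
              + σ ^ 4 * (1 + Real.log (1 / a)) ^ 2) := by
  refine ⟨86, by norm_num, fun μ σ a hσ ha0 ha1 S _ haS => ?_⟩
  have hv : (⟨σ ^ 2, sq_nonneg σ⟩ : ℝ≥0) ≠ 0 :=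
    NNReal.coe_ne_zero.mp (pow_pos hσ 2).ne'
  convert variance_sq_cond_gaussianReal_le hv ha0 ha1 haS using 3
  · rfl
  · change σ ^ 4 * _ = (σ ^ 2) ^ 2 * _
    ring
end

section
/- Fix x ∈ ℝᵏ, y ∈ ℝ, and a measurable set S ⊆ ℝ of positive Lebesgue measure. Then the reparameterized negative conditional log-likelihood ℓ(v, λ) = ½·(λ·y² − 2y·vᵀx) + log( ∫_S exp( −½·(λ·z² − 2z·vᵀx) ) dz ) is a convex function of (v, λ) on ℝᵏ × (0, ∞). In particular, the log-partition function (v, λ) ↦ log ∫_S exp(z·vᵀx − λ·z²/2) dz is convex on ℝᵏ × (0, ∞). -/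
/-!
Write `θ = (v, λ)` and `Z(θ) = ∫_S exp(z vᵀx - λ z² / 2) dz`. The exponent is linear in `θ`, so at
`a θ + b θ'` (with `a + b = 1`) the integrand is the product of the `a`-th and `b`-th powers of the
integrands at `θ` and `θ'`; Hölder's inequality with exponents `1/a, 1/b` gives
`Z(a θ + b θ') ≤ Z(θ)^a Z(θ')^b`, i.e. `log Z` is convex. The likelihood `ℓ` is `log Z` plus a linear
function of `θ`.
-/

open Matrix MeasureTheory Real

namespace MeasureTheory

variable {α : Type*} [MeasurableSpace α] {μ : Measure α}

theorem integral_rpow_mul_rpow_le {f g : α → ℝ} (hf₀ : 0 ≤ᵐ[μ] f) (hg₀ : 0 ≤ᵐ[μ] g)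
    (hf : Integrable f μ) (hg : Integrable g μ) {p q : ℝ} (hp : 0 ≤ p) (hq : 0 ≤ q)
    (hpq : p + q = 1) :
    ∫ a, f a ^ p * g a ^ q ∂μ ≤ (∫ a, f a ∂μ) ^ p * (∫ a, g a ∂μ) ^ q := by
  have hfg₀ : 0 ≤ᵐ[μ] fun a => f a ^ p * g a ^ q := by
    filter_upwards [hf₀, hg₀] with a hfa hga
    exact mul_nonneg (rpow_nonneg hfa p) (rpow_nonneg hga q)
  have hfg_meas : AEStronglyMeasurable (fun a => f a ^ p * g a ^ q) μ :=
    ((hf.1.aemeasurable.pow_const p).mul (hg.1.aemeasurable.pow_const q)).aestronglyMeasurable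
  have hsplit : ∀ᵐ a ∂μ, ENNReal.ofReal (f a ^ p * g a ^ q)
      = ENNReal.ofReal (f a) ^ p * ENNReal.ofReal (g a) ^ q := by
    filter_upwards [hf₀, hg₀] with a hfa hga
    rw [ENNReal.ofReal_mul (rpow_nonneg hfa p), ENNReal.ofReal_rpow_of_nonneg hfa hp,
      ENNReal.ofReal_rpow_of_nonneg hga hq]
  rw [integral_eq_lintegral_of_nonneg_ae hfg₀ hfg_meas, integral_eq_lintegral_of_nonneg_ae hf₀ hf.1,
    integral_eq_lintegral_of_nonneg_ae hg₀ hg.1, lintegral_congr_ae hsplit,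
    ENNReal.toReal_rpow, ENNReal.toReal_rpow, ← ENNReal.toReal_mul]
  refine ENNReal.toReal_mono ?_ (ENNReal.lintegral_mul_norm_pow_le hf.1.aemeasurable.ennreal_ofReal
    hg.1.aemeasurable.ennreal_ofReal hp hq hpq)
  exact ENNReal.mul_ne_top (ENNReal.rpow_ne_top_of_nonneg hp hf.lintegral_lt_top.ne)
    (ENNReal.rpow_ne_top_of_nonneg hq hg.lintegral_lt_top.ne)

theorem convexOn_log_integral_exp {E : Type*} [AddCommGroup E] [Module ℝ E] [NeZero μ]
    {s : Set E} {T : α → E →ᵃ[ℝ] ℝ} (hs : Convex ℝ s)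
    (hT : ∀ θ ∈ s, Integrable (fun z => exp (T z θ)) μ) :
    ConvexOn ℝ s (fun θ => log (∫ z, exp (T z θ) ∂μ)) := by
  refine ⟨hs, fun θ hθ θ' hθ' a b ha hb hab => ?_⟩
  have hsplit : ∀ z, exp (T z (a • θ + b • θ')) = exp (T z θ) ^ a * exp (T z θ') ^ b := by
    intro z
    rw [Convex.combo_affine_apply hab, ← exp_mul, ← exp_mul, ← exp_add, smul_eq_mul, smul_eq_mul,
      mul_comm a, mul_comm b]
  have hZ := integral_exp_pos (hT θ hθ)
  have hZ' := integral_exp_pos (hT θ' hθ')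
  calc log (∫ z, exp (T z (a • θ + b • θ')) ∂μ)
      = log (∫ z, exp (T z θ) ^ a * exp (T z θ') ^ b ∂μ) := by simp_rw [hsplit]
    _ ≤ log ((∫ z, exp (T z θ) ∂μ) ^ a * (∫ z, exp (T z θ') ∂μ) ^ b) := by
      refine log_le_log ?_ ?_
      · simpa only [← hsplit] using integral_exp_pos (hT _ (hs hθ hθ' ha hb hab))
      · exact integral_rpow_mul_rpow_le (.of_forall fun z => (exp_pos _).le)
          (.of_forall fun z => (exp_pos _).le) (hT θ hθ) (hT θ' hθ') ha hb hab
    _ = a • log (∫ z, exp (T z θ) ∂μ) + b • log (∫ z, exp (T z θ') ∂μ) := by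
      rw [log_mul (rpow_pos_of_pos hZ a).ne' (rpow_pos_of_pos hZ' b).ne', log_rpow hZ,
        log_rpow hZ', smul_eq_mul, smul_eq_mul]

end MeasureTheory

theorem integrable_exp_mul_sub_mul_sq {c l : ℝ} (hl : 0 < l) :
    Integrable (fun z : ℝ => exp (z * c - l * z ^ 2 / 2)) := by
  have hgauss : Integrable (fun z : ℝ =>
      exp (c ^ 2 / (2 * l)) * exp (-(l / 2) * (z - c / l) ^ 2)) :=
    ((integrable_exp_neg_mul_sq (by positivity)).comp_sub_right (c / l)).const_mul _
  refine hgauss.congr (.of_forall fun z => ?_)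
  dsimp only
  rw [← exp_add]
  congr 1
  field_simp
  ring

/-- The pairing of the natural parameter `(v, λ)` with the sufficient statistic `(z x, -z² / 2)`. -/
noncomputable def gaussianExponent {k : ℕ} (x : Fin k → ℝ) (z : ℝ) : ((Fin k → ℝ) × ℝ) →ₗ[ℝ] ℝ :=
  z • (dotProductBilin ℝ ℝ x ∘ₗ LinearMap.fst ℝ _ ℝ) - (z ^ 2 / 2) • LinearMap.snd ℝ (Fin k → ℝ) ℝ

@[simp]
theorem gaussianExponent_apply {k : ℕ} (x : Fin k → ℝ) (z : ℝ) (p : (Fin k → ℝ) × ℝ) :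
    gaussianExponent x z p = z * (p.1 ⬝ᵥ x) - p.2 * z ^ 2 / 2 := by
  simp only [gaussianExponent, dotProductBilin, LinearMap.coe_mk, AddHom.coe_mk,
    dotProduct_comm x, LinearMap.sub_apply, LinearMap.smul_apply, LinearMap.coe_comp,
    LinearMap.coe_fst, Function.comp_apply, smul_eq_mul, LinearMap.snd_apply, sub_right_inj]
  ring

theorem stmt_18_general {k : ℕ} (x : Fin k → ℝ) (y : ℝ) (S : Set ℝ)
    (hpos : 0 < MeasureTheory.volume S) :
    ConvexOn ℝ {p : (Fin k → ℝ) × ℝ | 0 < p.2}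
        (fun p => (1 / 2) * (p.2 * y ^ 2 - 2 * y * (p.1 ⬝ᵥ x))
          + Real.log (∫ z in S, Real.exp (-(1 / 2) * (p.2 * z ^ 2 - 2 * z * (p.1 ⬝ᵥ x))))) ∧
      ConvexOn ℝ {p : (Fin k → ℝ) × ℝ | 0 < p.2}
        (fun p => Real.log (∫ z in S, Real.exp (z * (p.1 ⬝ᵥ x) - p.2 * z ^ 2 / 2))) := by
  have : NeZero (volume.restrict S) := ⟨by simpa [Measure.restrict_eq_zero] using hpos.ne'⟩
  have hs : Convex ℝ {p : (Fin k → ℝ) × ℝ | 0 < p.2} :=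
    convex_halfSpace_gt (LinearMap.snd ℝ _ ℝ).isLinear 0
  have hlogZ : ConvexOn ℝ {p : (Fin k → ℝ) × ℝ | 0 < p.2}
      (fun p => log (∫ z in S, exp (z * (p.1 ⬝ᵥ x) - p.2 * z ^ 2 / 2))) := by
    simpa using convexOn_log_integral_exp (T := fun z => (gaussianExponent x z).toAffineMap) hs
      fun p hp => by simpa [IntegrableOn] using (integrable_exp_mul_sub_mul_sq hp).integrableOn
  refine ⟨?_, hlogZ⟩
  have hexponent : ∀ z c l : ℝ, -(1 / 2) * (l * z ^ 2 - 2 * z * c) = z * c - l * z ^ 2 / 2 :=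
    fun z c l => by ring
  refine (((-gaussianExponent x y).convexOn hs).add hlogZ).congr fun p _ => ?_
  simp only [hexponent, Pi.add_apply, LinearMap.neg_apply, gaussianExponent_apply]
  ring

/-- Fix `x ∈ ℝᵏ`, `y ∈ ℝ` and a measurable `S ⊆ ℝ` of positive Lebesgue
measure. The reparameterized negative conditional log-likelihood
`ℓ(v, λ) = ½(λy² − 2y·vᵀx) + log ∫_S exp(−½(λz² − 2z·vᵀx)) dz`
is convex on `ℝᵏ × (0, ∞)`; in particular the log-partition function
`(v, λ) ↦ log ∫_S exp(z·vᵀx − λz²/2) dz` is convex on `ℝᵏ × (0, ∞)`. -/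
theorem stmt_18 {k : ℕ} (x : Fin k → ℝ) (y : ℝ) (S : Set ℝ) (hS : MeasurableSet S)
    (hpos : 0 < MeasureTheory.volume S) :
    ConvexOn ℝ {p : (Fin k → ℝ) × ℝ | 0 < p.2}
        (fun p => (1 / 2) * (p.2 * y ^ 2 - 2 * y * (p.1 ⬝ᵥ x))
          + Real.log (∫ z in S, Real.exp (-(1 / 2) * (p.2 * z ^ 2 - 2 * z * (p.1 ⬝ᵥ x))))) ∧
      ConvexOn ℝ {p : (Fin k → ℝ) × ℝ | 0 < p.2}
        (fun p => Real.log (∫ z in S, Real.exp (z * (p.1 ⬝ᵥ x) - p.2 * z ^ 2 / 2))) :=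
  stmt_18_general x y S hpos
end
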